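/- Let V be a finite index set and let (μ⁽¹⁾, Σ⁽¹⁾), (μ⁽²⁾, Σ⁽²⁾) be two pairs of mean vectors and symmetric positive definite covariance matrices indexed by V. Then a minimal seed set for the two pairs exists and is unique; explicitly, the intersection D₀ := ⋂ { D ⊆ V : D is a seed set } of all seed sets is itself a seed set, is contained in every seed set, and is the unique minimal seed set. -/

import Mathlib

open Matrix

/-- Sub-matrix of `M` with rows indexed by `A` and columns indexed by `B`. -/
def msub {V : Type*} [Fintype V] [DecidableEq V] (M : Matrix V V ℝ) (A B : Finset V) :
    Matrix A B ℝ :=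
  M.submatrix (fun a => a.1) (fun b => b.1)

/-- Principal sub-matrix of `M` indexed by the finset `A`. -/
def psub {V : Type*} [Fintype V] [DecidableEq V] (M : Matrix V V ℝ) (A : Finset V) :
    Matrix A A ℝ :=
  msub M A A

/-- Sub-vector of `x` indexed by the finset `A`. -/
def rest {V : Type*} (x : V → ℝ) (A : Finset V) : A → ℝ := fun a => x a.1

/-- The conditional parameters of `X_B` given `X_S` for a Gaussian vector with
parameters `(μ, Σ)`: the triple
`(μ_B − Σ_{B,S} Σ_S⁻¹ μ_S, Σ_{B,S} Σ_S⁻¹, Σ_B − Σ_{B,S} Σ_S⁻¹ Σ_{S,B})`. -/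
noncomputable def condParams {V : Type*} [Fintype V] [DecidableEq V]
    (μ : V → ℝ) (Sg : Matrix V V ℝ) (B S : Finset V) :
    (B → ℝ) × Matrix B S ℝ × Matrix B B ℝ :=
  (rest μ B - (msub Sg B S * (psub Sg S)⁻¹) *ᵥ rest μ S,
   msub Sg B S * (psub Sg S)⁻¹,
   psub Sg B - msub Sg B S * (psub Sg S)⁻¹ * msub Sg S B)

/-- `D` is a seed set for the pairs `(μ⁽¹⁾, Σ⁽¹⁾)`, `(μ⁽²⁾, Σ⁽²⁾)` if the conditional
parameters of `X_{V∖D}` given `X_D` coincide for the two pairs.  (For `D = V` the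
condition is vacuous, and for `D = ∅` it amounts to equality of the two pairs.) -/
def IsSeedSet {V : Type*} [Fintype V] [DecidableEq V]
    (μ₁ : V → ℝ) (S₁ : Matrix V V ℝ) (μ₂ : V → ℝ) (S₂ : Matrix V V ℝ)
    (D : Finset V) : Prop :=
  condParams μ₁ S₁ Dᶜ D = condParams μ₂ S₂ Dᶜ D

/-- `D` is a minimal seed set if it is a seed set and no proper subset of it is a
seed set. -/
def IsMinimalSeedSet {V : Type*} [Fintype V] [DecidableEq V]
    (μ₁ : V → ℝ) (S₁ : Matrix V V ℝ) (μ₂ : V → ℝ) (S₂ : Matrix V V ℝ)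
    (D : Finset V) : Prop :=
  IsSeedSet μ₁ S₁ μ₂ S₂ D ∧ ∀ D' ⊂ D, ¬ IsSeedSet μ₁ S₁ μ₂ S₂ D'

/-!
Seed sets are governed by the canonical parameters `K = Σ⁻¹` and `h = Σ⁻¹ μ`. For the
complement `C = V ∖ D`, block inversion of `Σ` shows that the Schur complement
`Σ_C − Σ_{C,D} Σ_D⁻¹ Σ_{D,C}` is `K_C⁻¹`, so the conditional parameters of `X_C` given `X_D`
are `(K_C⁻¹ h_C, −K_C⁻¹ K_{C,D}, K_C⁻¹)`. These determine and are determined by the rows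
of `(K, h)` indexed by `C`. Hence `D` is a seed set exactly when it contains every index
at which the rows of `(K₁, h₁)` and `(K₂, h₂)` differ, and the seed sets are precisely the
supersets of that one set.
-/

lemma inv_mulVec_neg_inv_mul_inv_eq_iff {m n α : Type*} [Fintype m] [DecidableEq m]
    [CommRing α] {A A' : Matrix m m α} (hA : IsUnit A.det)
    {B B' : Matrix m n α} {h h' : m → α} :
    (A⁻¹ *ᵥ h, -(A⁻¹ * B), A⁻¹) = (A'⁻¹ *ᵥ h', -(A'⁻¹ * B'), A'⁻¹) ↔
      h = h' ∧ B = B' ∧ A = A' := by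
  constructor
  · simp only [Prod.mk.injEq, neg_inj]
    rintro ⟨hh, hB, hAA⟩
    obtain rfl : A = A' := inv_inj hAA hA
    refine ⟨?_, ?_, rfl⟩
    · simpa [mulVec_mulVec, mul_nonsing_inv A hA] using congrArg (A *ᵥ ·) hh
    · simpa [mul_nonsing_inv_cancel_left A _ hA] using congrArg (A * ·) hB
  · rintro ⟨rfl, rfl, rfl⟩
    rfl

section SeedSets

variable {V : Type*} [Fintype V] [DecidableEq V]

lemma msub_mul_eq_add (M N : Matrix V V ℝ) (B C D : Finset V) :
    msub (M * N) B C = msub M B Dᶜ * msub N Dᶜ C + msub M B D * msub N D C := by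
  ext b c
  simp only [msub, submatrix_apply, Matrix.mul_apply, Matrix.add_apply]
  rw [Finset.sum_coe_sort Dᶜ (fun v => M b v * N v c),
    Finset.sum_coe_sort D (fun v => M b v * N v c), Finset.sum_compl_add_sum]

lemma rest_mulVec_eq_add (M : Matrix V V ℝ) (x : V → ℝ) (B D : Finset V) :
    rest (M *ᵥ x) B = msub M B Dᶜ *ᵥ rest x Dᶜ + msub M B D *ᵥ rest x D := by
  funext b
  simp only [rest, msub, mulVec, dotProduct, submatrix_apply, Pi.add_apply]
  rw [Finset.sum_coe_sort Dᶜ (fun v => M b v * x v),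
    Finset.sum_coe_sort D (fun v => M b v * x v), Finset.sum_compl_add_sum]

lemma psub_one (A : Finset V) : psub (1 : Matrix V V ℝ) A = 1 :=
  submatrix_one _ Subtype.val_injective

lemma msub_one_compl (D : Finset V) : msub (1 : Matrix V V ℝ) Dᶜ D = 0 := by
  ext a d
  have had : a.1 ≠ d.1 := fun h => Finset.mem_compl.mp a.2 (h ▸ d.2)
  simp [msub, one_apply, had]

section SchurComplement

variable {Sg : Matrix V V ℝ} {D : Finset V}

lemma msub_inv_compl (hS : IsUnit Sg.det) (hD : IsUnit (psub Sg D).det) :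
    msub Sg⁻¹ Dᶜ D = -(psub Sg⁻¹ Dᶜ * (msub Sg Dᶜ D * (psub Sg D)⁻¹)) := by
  have hKS : psub Sg⁻¹ Dᶜ * msub Sg Dᶜ D + msub Sg⁻¹ Dᶜ D * psub Sg D = 0 := by
    simpa only [psub, nonsing_inv_mul Sg hS, msub_one_compl]
      using (msub_mul_eq_add Sg⁻¹ Sg Dᶜ D D).symm
  rw [← mul_nonsing_inv_cancel_right (psub Sg D) (msub Sg⁻¹ Dᶜ D) hD,
    eq_neg_of_add_eq_zero_right hKS, Matrix.neg_mul, Matrix.mul_assoc]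

lemma psub_inv_compl_mul_schur (hS : IsUnit Sg.det) (hD : IsUnit (psub Sg D).det) :
    psub Sg⁻¹ Dᶜ * (psub Sg Dᶜ - msub Sg Dᶜ D * (psub Sg D)⁻¹ * msub Sg D Dᶜ) = 1 := by
  have hKS : psub Sg⁻¹ Dᶜ * psub Sg Dᶜ + msub Sg⁻¹ Dᶜ D * msub Sg D Dᶜ = 1 := by
    rw [← psub_one Dᶜ, ← nonsing_inv_mul Sg hS]
    exact (msub_mul_eq_add Sg⁻¹ Sg Dᶜ Dᶜ D).symm
  rw [msub_inv_compl hS hD, Matrix.neg_mul, ← sub_eq_add_neg] at hKS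
  rw [Matrix.mul_sub, ← hKS]
  simp only [Matrix.mul_assoc]

lemma condParams_compl_eq (μ : V → ℝ) (hS : IsUnit Sg.det) (hD : IsUnit (psub Sg D).det) :
    condParams μ Sg Dᶜ D =
      ((psub Sg⁻¹ Dᶜ)⁻¹ *ᵥ rest (Sg⁻¹ *ᵥ μ) Dᶜ,
       -((psub Sg⁻¹ Dᶜ)⁻¹ * msub Sg⁻¹ Dᶜ D),
       (psub Sg⁻¹ Dᶜ)⁻¹) := by
  set R := msub Sg Dᶜ D * (psub Sg D)⁻¹
  have hK : psub Sg⁻¹ Dᶜ * (psub Sg Dᶜ - R * msub Sg D Dᶜ) = 1 :=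
    psub_inv_compl_mul_schur hS hD
  have hinv : (psub Sg⁻¹ Dᶜ)⁻¹ = psub Sg Dᶜ - R * msub Sg D Dᶜ := inv_eq_right_inv hK
  have hcancel : (psub Sg⁻¹ Dᶜ)⁻¹ * psub Sg⁻¹ Dᶜ = 1 :=
    nonsing_inv_mul _ (isUnit_det_of_right_inverse hK)
  have hR : -((psub Sg⁻¹ Dᶜ)⁻¹ * msub Sg⁻¹ Dᶜ D) = R := by
    rw [msub_inv_compl hS hD, Matrix.mul_neg, neg_neg, ← Matrix.mul_assoc, hcancel,
      Matrix.one_mul]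
  have hmean : (psub Sg⁻¹ Dᶜ)⁻¹ *ᵥ rest (Sg⁻¹ *ᵥ μ) Dᶜ = rest μ Dᶜ - R *ᵥ rest μ D := by
    rw [rest_mulVec_eq_add Sg⁻¹ μ Dᶜ D, ← psub, mulVec_add, ← neg_neg (msub Sg⁻¹ Dᶜ D),
      Matrix.neg_mulVec, mulVec_neg, mulVec_mulVec, mulVec_mulVec, Matrix.mul_neg, hR, hcancel,
      one_mulVec, ← sub_eq_add_neg]
  rw [hR, hmean, hinv]
  rfl

end SchurComplement

lemma rest_msub_psub_compl_eq_iff (K K' : Matrix V V ℝ) (h h' : V → ℝ) (D : Finset V) :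
    (rest h Dᶜ = rest h' Dᶜ ∧ msub K Dᶜ D = msub K' Dᶜ D ∧ psub K Dᶜ = psub K' Dᶜ) ↔
      ∀ i ∉ D, K i = K' i ∧ h i = h' i := by
  constructor
  · rintro ⟨hh, hKD, hKC⟩ i hi
    have hi' : i ∈ Dᶜ := Finset.mem_compl.mpr hi
    refine ⟨funext fun j => ?_, congrFun hh ⟨i, hi'⟩⟩
    by_cases hj : j ∈ D
    · exact congrFun (congrFun hKD ⟨i, hi'⟩) ⟨j, hj⟩
    · exact congrFun (congrFun hKC ⟨i, hi'⟩) ⟨j, Finset.mem_compl.mpr hj⟩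
  · intro hrows
    have hrow : ∀ i : (Dᶜ : Finset V), K i = K' i ∧ h i = h' i :=
      fun i => hrows i (Finset.mem_compl.mp i.2)
    exact ⟨funext fun i => (hrow i).2, by ext i j; exact congrFun (hrow i).1 j,
      by ext i j; exact congrFun (hrow i).1 j⟩

variable {μ₁ μ₂ : V → ℝ} {S₁ S₂ : Matrix V V ℝ}

lemma isSeedSet_iff_rows (h₁ : S₁.PosDef) (h₂ : S₂.PosDef) (D : Finset V) :
    IsSeedSet μ₁ S₁ μ₂ S₂ D ↔
      ∀ i ∉ D, S₁⁻¹ i = S₂⁻¹ i ∧ (S₁⁻¹ *ᵥ μ₁) i = (S₂⁻¹ *ᵥ μ₂) i := by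
  have hdet : ∀ {S : Matrix V V ℝ} (A : Finset V), S.PosDef → IsUnit (psub S A).det :=
    fun A hS => (hS.submatrix Subtype.val_injective).isUnit.map detMonoidHom
  rw [IsSeedSet, condParams_compl_eq μ₁ (h₁.isUnit.map detMonoidHom) (hdet D h₁),
    condParams_compl_eq μ₂ (h₂.isUnit.map detMonoidHom) (hdet D h₂),
    inv_mulVec_neg_inv_mul_inv_eq_iff (hdet Dᶜ h₁.inv),
    rest_msub_psub_compl_eq_iff]

open Classical in
noncomputable def seedCore (μ₁ : V → ℝ) (S₁ : Matrix V V ℝ) (μ₂ : V → ℝ)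
    (S₂ : Matrix V V ℝ) : Finset V :=
  Finset.univ.filter fun i => ¬ (S₁⁻¹ i = S₂⁻¹ i ∧ (S₁⁻¹ *ᵥ μ₁) i = (S₂⁻¹ *ᵥ μ₂) i)

lemma isSeedSet_iff_seedCore_subset (h₁ : S₁.PosDef) (h₂ : S₂.PosDef) (D : Finset V) :
    IsSeedSet μ₁ S₁ μ₂ S₂ D ↔ seedCore μ₁ S₁ μ₂ S₂ ⊆ D := by
  rw [isSeedSet_iff_rows h₁ h₂]
  refine forall_congr' fun i => ?_
  by_cases hi : i ∈ D <;> simp [seedCore, hi]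

end SeedSets

theorem stmt_11_general {V : Type*} [Fintype V] [DecidableEq V]
    (μ₁ μ₂ : V → ℝ) (S₁ S₂ : Matrix V V ℝ)
    (h₁ : S₁.PosDef) (h₂ : S₂.PosDef) :
    ∃ D₀ : Finset V,
      (∀ v : V, v ∈ D₀ ↔ ∀ D : Finset V, IsSeedSet μ₁ S₁ μ₂ S₂ D → v ∈ D) ∧
      IsSeedSet μ₁ S₁ μ₂ S₂ D₀ ∧
      (∀ D : Finset V, IsSeedSet μ₁ S₁ μ₂ S₂ D → D₀ ⊆ D) ∧
      IsMinimalSeedSet μ₁ S₁ μ₂ S₂ D₀ ∧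
      (∀ D' : Finset V, IsMinimalSeedSet μ₁ S₁ μ₂ S₂ D' → D' = D₀) := by
  have hseed := isSeedSet_iff_seedCore_subset (μ₁ := μ₁) (μ₂ := μ₂) h₁ h₂
  have hcore : IsSeedSet μ₁ S₁ μ₂ S₂ (seedCore μ₁ S₁ μ₂ S₂) := (hseed _).mpr subset_rfl
  have hmin : IsMinimalSeedSet μ₁ S₁ μ₂ S₂ (seedCore μ₁ S₁ μ₂ S₂) :=
    ⟨hcore, fun D hD hDseed => hD.not_subset ((hseed D).mp hDseed)⟩
  refine ⟨seedCore μ₁ S₁ μ₂ S₂, fun v => ⟨fun hv D hD => (hseed D).mp hD hv,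
    fun hv => hv _ hcore⟩, hcore, fun D => (hseed D).mp, hmin, fun D hD => ?_⟩
  exact (eq_of_le_of_not_lt ((hseed D).mp hD.1) fun hlt => hD.2 _ hlt hcore).symm

/-- The minimal seed set exists and is unique: the intersection `D₀` of all seed sets
(characterized by `v ∈ D₀ ↔ v` belongs to every seed set) is itself a seed set, is
contained in every seed set, is a minimal seed set, and is the unique minimal seed set. -/
theorem stmt_11 {V : Type*} [Fintype V] [DecidableEq V]
    (μ₁ μ₂ : V → ℝ) (S₁ S₂ : Matrix V V ℝ)
    (h₁sym : S₁.IsSymm) (h₂sym : S₂.IsSymm)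
    (h₁ : S₁.PosDef) (h₂ : S₂.PosDef) :
    ∃ D₀ : Finset V,
      (∀ v : V, v ∈ D₀ ↔ ∀ D : Finset V, IsSeedSet μ₁ S₁ μ₂ S₂ D → v ∈ D) ∧
      IsSeedSet μ₁ S₁ μ₂ S₂ D₀ ∧
      (∀ D : Finset V, IsSeedSet μ₁ S₁ μ₂ S₂ D → D₀ ⊆ D) ∧
      IsMinimalSeedSet μ₁ S₁ μ₂ S₂ D₀ ∧
      (∀ D' : Finset V, IsMinimalSeedSet μ₁ S₁ μ₂ S₂ D' → D' = D₀) :=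
  stmt_11_general μ₁ μ₂ S₁ S₂ h₁ h₂
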